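/- arXiv:1904.06161 — 7 statements merged into one kernel-verified Lean document; each statement's English description precedes it below -/
import Mathlib

section
/- The mean first passage time distance on the Cayley graph satisfies the directional triangle inequality: for all g, h ∈ G, d(g·h) ≤ d(g) + d(h). -/
open MeasureTheory
open scoped ENNReal

/-- Discrete measurable structure on the elements of a finset. -/
instance fintypeStepSpace {α : Type*} (S : Finset α) : MeasurableSpace S := ⊤

/-- The right random walk on the Cayley graph of `(G,S)` started at the identity:
`W_0(ω) = 1` and `W_n(ω) = ω(0)·ω(1)⋯ω(n−1)`. -/
def walk {G : Type*} [Group G] (S : Finset G) (ω : ℕ → S) (n : ℕ) : G :=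
  (List.ofFn fun i : Fin n => (ω i : G)).prod

/-- The first passage time `τ_g(ω) = inf { n : ℕ | W_n(ω) = g }`, valued in `ℕ∞`
(in particular it is `⊤` if the walk never reaches `g`). -/
noncomputable def tau {G : Type*} [Group G] (S : Finset G) (g : G) (ω : ℕ → S) : ℕ∞ :=
  sInf ((Nat.cast : ℕ → ℕ∞) '' {n : ℕ | walk S ω n = g})

/-- `μ` is the infinite product over `ℕ` of the uniform probability measure on `S`:
a probability measure giving each cylinder set on the first `n` coordinates
probability `|S|⁻ⁿ`.  (These conditions determine the product measure uniquely.) -/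
def IsUniformProductMeasure {G : Type*} [Group G] (S : Finset G)
    (μ : Measure (ℕ → S)) : Prop :=
  IsProbabilityMeasure μ ∧
    ∀ (n : ℕ) (w : Fin n → S),
      μ {ω | ∀ i : Fin n, ω (i : ℕ) = w i} = ((S.card : ℝ≥0∞))⁻¹ ^ n

/-- The mean first passage time `d(g) = ∫ τ_g dμ`, valued in `[0,∞]`. -/
noncomputable def mfpt {G : Type*} [Group G] (S : Finset G) (μ : Measure (ℕ → S))
    (g : G) : ℝ≥0∞ :=
  ∫⁻ ω, (tau S g ω : ℝ≥0∞) ∂μ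

set_option linter.unusedSectionVars false
set_option linter.unusedVariables false

section Aux
variable {G : Type*} [Group G] (S : Finset G)

def theta (n : ℕ) (ω : ℕ → S) : ℕ → S := fun i => ω (n + i)

lemma walk_add (ω : ℕ → S) (n m : ℕ) :
    walk S ω (n + m) = walk S ω n * walk S (theta S n ω) m := by
  unfold walk
  rw [List.ofFn_add, List.prod_append]
  rfl

lemma walk_congr {ω ω' : ℕ → S} {k : ℕ} (h : ∀ i < k, ω i = ω' i) :
    walk S ω k = walk S ω' k := by
  unfold walk
  have : (fun i : Fin k => ((ω i : G))) = fun i : Fin k => ((ω' i : G)) := by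
    funext i
    rw [h i i.2]
  rw [this]

variable {g : G} {ω : ℕ → S} {n : ℕ}

lemma tau_le (h : walk S ω n = g) : tau S g ω ≤ (n : ℕ∞) :=
  sInf_le ⟨n, h, rfl⟩

lemma tau_le_coe_iff : tau S g ω ≤ (n : ℕ∞) ↔ ∃ k ≤ n, walk S ω k = g := by
  constructor
  · intro hle
    by_contra hc
    push_neg at hc
    have : ((n : ℕ∞) + 1) ≤ tau S g ω := by
      apply le_sInf
      rintro x ⟨m, hm, rfl⟩
      have : n < m := by
        by_contra hnm
        exact hc m (le_of_not_gt hnm) hm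
      exact_mod_cast this
    have h2 := this.trans hle
    have h3 : ((n+1 : ℕ) : ℕ∞) ≤ ((n:ℕ) : ℕ∞) := by push_cast; exact h2
    rw [Nat.cast_le] at h3
    omega
  · rintro ⟨k, hk, hw⟩
    exact (tau_le S hw).trans (by exact_mod_cast hk)

lemma coe_lt_tau_iff : (n : ℕ∞) < tau S g ω ↔ ∀ k ≤ n, walk S ω k ≠ g := by
  rw [← not_le, tau_le_coe_iff]
  push_neg
  rfl

lemma tau_eq_coe_iff :
    tau S g ω = (n : ℕ∞) ↔ walk S ω n = g ∧ ∀ k < n, walk S ω k ≠ g := by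
  constructor
  · intro h
    have hne : {m : ℕ | walk S ω m = g}.Nonempty := by
      by_contra hc
      rw [Set.not_nonempty_iff_eq_empty] at hc
      rw [tau, hc] at h
      simp at h
    have heq : tau S g ω = ((sInf {m : ℕ | walk S ω m = g} : ℕ) : ℕ∞) := by
      apply le_antisymm
      · exact tau_le S (Nat.sInf_mem hne)
      · apply le_sInf
        rintro x ⟨m, hm, rfl⟩
        exact_mod_cast Nat.sInf_le hm
    rw [heq] at h
    have hn : sInf {m : ℕ | walk S ω m = g} = n := by exact_mod_cast h
    constructor
    · rw [← hn]; exact Nat.sInf_mem hne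
    · intro k hk
      rw [← hn] at hk
      exact Nat.notMem_of_lt_sInf hk
  · rintro ⟨h1, h2⟩
    apply le_antisymm (tau_le S h1)
    apply le_sInf
    rintro x ⟨m, hm, rfl⟩
    have : n ≤ m := by
      by_contra hc
      exact h2 m (lt_of_not_ge hc) hm
    exact_mod_cast this

lemma enat_toENNReal_eq (t : ℕ∞) :
    (t : ℝ≥0∞) = ∑' k : ℕ, if (k : ℕ∞) < t then 1 else 0 := by
  cases t with
  | top =>
    rw [ENat.toENNReal_top]
    simp only [ENat.coe_lt_top, if_true]
    exact (ENNReal.tsum_const_eq_top_of_ne_zero one_ne_zero).symm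
  | coe m =>
    rw [ENat.toENNReal_coe]
    have h1 : ∑' k : ℕ, (if ((k:ℕ∞) < (m:ℕ∞)) then (1:ℝ≥0∞) else 0)
        = ∑ k ∈ Finset.range m, (if ((k:ℕ∞) < (m:ℕ∞)) then (1:ℝ≥0∞) else 0) :=
      tsum_eq_sum (by
        intro k hk
        simp only [Finset.mem_range, not_lt] at hk
        exact if_neg (by exact_mod_cast not_lt.mpr hk))
    have h2 : ∑ k ∈ Finset.range m, (if ((k:ℕ∞) < (m:ℕ∞)) then (1:ℝ≥0∞) else 0)
        = ∑ _k ∈ Finset.range m, (1:ℝ≥0∞) :=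
      Finset.sum_congr rfl (fun k hk => if_pos (by exact_mod_cast Finset.mem_range.mp hk))
    rw [h1, h2]
    simp

end Aux

section Meas
variable {G : Type*} [Group G] (S : Finset G)

instance : MeasurableSingletonClass S := ⟨fun _ => trivial⟩

def cyl (n : ℕ) (w : Fin n → S) : Set (ℕ → S) := {ω | ∀ i : Fin n, ω (i : ℕ) = w i}

lemma measurableSet_finDep {n : ℕ} (P : (Fin n → S) → Prop) :
    MeasurableSet {ω : ℕ → S | P fun i : Fin n => ω (i : ℕ)} := by
  have h : {ω : ℕ → S | P fun i : Fin n => ω (i:ℕ)}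
      = (fun (ω : ℕ → S) (i : Fin n) => ω (i:ℕ)) ⁻¹' {w | P w} := rfl
  rw [h]
  exact (Set.Finite.measurableSet (Set.toFinite _)).preimage
    (measurable_pi_lambda _ fun i => measurable_pi_apply _)

lemma measurableSet_cyl {n : ℕ} (w : Fin n → S) : MeasurableSet (cyl S n w) :=
  measurableSet_finDep S (fun v => ∀ i : Fin n, v i = w i)

lemma disjoint_cyl {n : ℕ} {w w' : Fin n → S} (hww : w ≠ w') :
    Disjoint (cyl S n w) (cyl S n w') := by
  rw [Set.disjoint_left]
  intro ω hw hw'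
  exact hww (funext fun i => (hw i).symm.trans (hw' i))

open Classical in
lemma eq_biUnion_cyl {n : ℕ} (B : Set (ℕ → S))
    (hB : ∀ ω ω' : ℕ → S, (∀ i : Fin n, ω (i:ℕ) = ω' (i:ℕ)) → ω ∈ B → ω' ∈ B) :
    B = ⋃ w ∈ Finset.univ.filter
        (fun w : Fin n → S => ∃ ω ∈ B, ∀ i : Fin n, ω (i:ℕ) = w i),
        cyl S n w := by
  ext ω
  simp only [Set.mem_iUnion, Finset.mem_filter, Finset.mem_univ, true_and]
  constructor
  · intro hω
    exact ⟨fun i => ω i, ⟨ω, hω, fun _ => rfl⟩, fun _ => rfl⟩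
  · rintro ⟨w, ⟨ω₀, hω₀, hag⟩, hcyl⟩
    exact hB ω₀ ω (fun i => (hag i).trans (hcyl i).symm) hω₀

def cylSystem : Set (Set (ℕ → S)) := {A | ∃ (n : ℕ) (w : Fin n → S), A = cyl S n w}

lemma isPiSystem_cylSystem : IsPiSystem (cylSystem S) := by
  rintro _ ⟨n, w, rfl⟩ _ ⟨m, v, rfl⟩ hne
  obtain ⟨ω, hω1, hω2⟩ := hne
  rcases le_total n m with hnm | hnm
  · have hsub : cyl S m v ⊆ cyl S n w := by
      intro ω' hω' i
      have i' : Fin m := ⟨(i:ℕ), lt_of_lt_of_le i.2 hnm⟩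
      exact (hω' ⟨(i:ℕ), lt_of_lt_of_le i.2 hnm⟩).trans
        ((hω2 ⟨(i:ℕ), lt_of_lt_of_le i.2 hnm⟩).symm.trans (hω1 i))
    rw [Set.inter_eq_self_of_subset_right hsub]
    exact ⟨m, v, rfl⟩
  · have hsub : cyl S n w ⊆ cyl S m v := by
      intro ω' hω' i
      exact (hω' ⟨(i:ℕ), lt_of_lt_of_le i.2 hnm⟩).trans
        ((hω1 ⟨(i:ℕ), lt_of_lt_of_le i.2 hnm⟩).symm.trans (hω2 i))
    rw [Set.inter_eq_self_of_subset_left hsub]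
    exact ⟨n, w, rfl⟩

lemma generateFrom_mem_findep {n : ℕ} (P : (Fin n → S) → Prop) :
    MeasurableSet[MeasurableSpace.generateFrom (cylSystem S)]
      {ω : ℕ → S | P fun i : Fin n => ω (i:ℕ)} := by
  classical
  rw [eq_biUnion_cyl S {ω : ℕ → S | P fun i : Fin n => ω (i:ℕ)}
      (fun ω ω' hag hω => by
        have he : (fun i : Fin n => ω' (i:ℕ)) = fun i : Fin n => ω (i:ℕ) :=
          funext fun i => (hag i).symm
        simpa only [Set.mem_setOf_eq, he] using hω)]
  exact MeasurableSet.biUnion (Finset.countable_toSet _)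
    (fun w _ => MeasurableSpace.measurableSet_generateFrom ⟨n, w, rfl⟩)

lemma generateFrom_cylSystem :
    (inferInstance : MeasurableSpace (ℕ → S)) =
      MeasurableSpace.generateFrom (cylSystem S) := by
  apply le_antisymm
  · have : (inferInstance : MeasurableSpace (ℕ → S)) = MeasurableSpace.pi := rfl
    rw [this, MeasurableSpace.pi]
    apply iSup_le
    intro i
    rintro s ⟨A, -, rfl⟩
    exact generateFrom_mem_findep S (fun v : Fin (i+1) → S => v ⟨i, Nat.lt_succ_self i⟩ ∈ A)
  · apply MeasurableSpace.generateFrom_le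
    rintro _ ⟨n, w, rfl⟩
    exact measurableSet_cyl S w

end Meas

section Meas2
variable {G : Type*} [Group G] (S : Finset G)

lemma measurable_theta (n : ℕ) : Measurable (theta S n) :=
  measurable_pi_lambda _ fun i => measurable_pi_apply _

lemma measurableSet_walk (k : ℕ) (g : G) : MeasurableSet {ω : ℕ → S | walk S ω k = g} :=
  measurableSet_finDep S (fun v : Fin k → S => (List.ofFn fun i : Fin k => (v i : G)).prod = g)

lemma measurableSet_tau_eq (g : G) (n : ℕ) :
    MeasurableSet {ω : ℕ → S | tau S g ω = (n : ℕ∞)} := by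
  have h : {ω : ℕ → S | tau S g ω = (n : ℕ∞)}
      = {ω : ℕ → S | walk S ω n = g} ∩ ⋂ k ∈ Finset.range n, {ω : ℕ → S | walk S ω k = g}ᶜ := by
    ext ω
    simp only [Set.mem_setOf_eq, Set.mem_inter_iff, Set.mem_iInter, Set.mem_compl_iff,
      Finset.mem_range, tau_eq_coe_iff]
  rw [h]
  exact (measurableSet_walk S n g).inter
    (MeasurableSet.biInter (Finset.range n).countable_toSet
      fun k _ => (measurableSet_walk S k g).compl)

lemma measurable_tauENN (g : G) :
    Measurable fun ω : ℕ → S => ((tau S g ω : ℕ∞) : ℝ≥0∞) := by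
  have h : (fun ω : ℕ → S => ((tau S g ω : ℕ∞) : ℝ≥0∞))
      = fun ω => ∑' k : ℕ,
          Set.indicator {ω' : ℕ → S | (k:ℕ∞) < tau S g ω'} (fun _ => 1) ω := by
    funext ω
    rw [enat_toENNReal_eq]
    congr 1
    funext k
    simp [Set.indicator_apply]
  rw [h]
  apply Measurable.ennreal_tsum
  intro k
  apply Measurable.indicator measurable_const
  have h2 : {ω' : ℕ → S | (k:ℕ∞) < tau S g ω'}
      = ⋂ j ∈ Finset.range (k+1), {ω' : ℕ → S | walk S ω' j = g}ᶜ := by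
    ext ω'
    simp [coe_lt_tau_iff, Nat.lt_succ_iff]
  rw [h2]
  exact MeasurableSet.biInter (Finset.range (k+1)).countable_toSet
    fun j _ => (measurableSet_walk S j g).compl

lemma cyl_inter_theta {n m : ℕ} (w : Fin n → S) (v : Fin m → S) :
    cyl S n w ∩ theta S n ⁻¹' (cyl S m v) = cyl S (n+m) (Fin.append w v) := by
  ext ω
  simp only [Set.mem_inter_iff, Set.mem_preimage, cyl, Set.mem_setOf_eq, theta]
  constructor
  · rintro ⟨h1, h2⟩ i
    refine Fin.addCases (fun j => ?_) (fun j => ?_) i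
    · rw [Fin.append_left]
      simpa using h1 j
    · rw [Fin.append_right]
      simpa using h2 j
  · intro H
    constructor
    · intro j
      have := H (Fin.castAdd m j)
      rwa [Fin.append_left, Fin.coe_castAdd] at this
    · intro j
      have := H (Fin.natAdd n j)
      rwa [Fin.append_right, Fin.coe_natAdd] at this

lemma map_theta_restrict_cyl (μ : Measure (ℕ → S)) [IsProbabilityMeasure μ]
    (hcyl : ∀ (n : ℕ) (w : Fin n → S),
      μ {ω | ∀ i : Fin n, ω (i : ℕ) = w i} = ((S.card : ℝ≥0∞))⁻¹ ^ n)
    (n : ℕ) (w : Fin n → S) :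
    Measure.map (theta S n) (μ.restrict (cyl S n w)) = μ (cyl S n w) • μ := by
  apply MeasureTheory.ext_of_generate_finite (cylSystem S) (generateFrom_cylSystem S)
    (isPiSystem_cylSystem S)
  · rintro _ ⟨m, v, rfl⟩
    rw [Measure.map_apply (measurable_theta S n) (measurableSet_cyl S v),
      Measure.restrict_apply ((measurable_theta S n) (measurableSet_cyl S v)),
      Set.inter_comm, cyl_inter_theta, Measure.smul_apply, smul_eq_mul]
    show μ (cyl S (n+m) (Fin.append w v)) = μ (cyl S n w) * μ (cyl S m v)
    have hc : ∀ (k : ℕ) (u : Fin k → S), μ (cyl S k u) = ((S.card : ℝ≥0∞))⁻¹ ^ k := hcyl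
    rw [hc, hc, hc, pow_add]
  · rw [Measure.map_apply (measurable_theta S n) MeasurableSet.univ,
      Set.preimage_univ, Measure.restrict_apply MeasurableSet.univ, Set.univ_inter,
      Measure.smul_apply, smul_eq_mul, measure_univ, mul_one]

lemma lintegral_cyl_shift (μ : Measure (ℕ → S)) [IsProbabilityMeasure μ]
    (hcyl : ∀ (n : ℕ) (w : Fin n → S),
      μ {ω | ∀ i : Fin n, ω (i : ℕ) = w i} = ((S.card : ℝ≥0∞))⁻¹ ^ n)
    (n : ℕ) (w : Fin n → S) {f : (ℕ → S) → ℝ≥0∞} (hf : Measurable f) :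
    ∫⁻ ω in cyl S n w, f (theta S n ω) ∂μ = μ (cyl S n w) * ∫⁻ ω, f ω ∂μ := by
  rw [← lintegral_map hf (measurable_theta S n), map_theta_restrict_cyl S μ hcyl n w,
    lintegral_smul_measure, smul_eq_mul]

end Meas2

/-- the MFPT distance satisfies the directional triangle inequality,
which by vertex transitivity of the Cayley graph takes the subadditivity form
`d(g·h) ≤ d(g) + d(h)`. -/
theorem mfpt_triangle {G : Type*} [Group G] [Fintype G] [DecidableEq G]
    (S : Finset G) (hgen : Subgroup.closure (S : Set G) = ⊤) (hone : (1 : G) ∉ S)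
    (μ : Measure (ℕ → S)) (hμ : IsUniformProductMeasure S μ) (g h : G) :
    mfpt S μ (g * h) ≤ mfpt S μ g + mfpt S μ h := by
  classical
  obtain ⟨hprob, hcyl⟩ := hμ
  haveI := hprob
  rcases eq_top_or_lt_top (mfpt S μ g + mfpt S μ h) with htop | hfin
  · rw [htop]; exact le_top
  have hg : mfpt S μ g < ⊤ := lt_of_le_of_lt le_self_add hfin
  set B : ℕ → Set (ℕ → S) := fun n => {ω | tau S g ω = (n : ℕ∞)} with hB
  have hBmeas : ∀ n, MeasurableSet (B n) := fun n => measurableSet_tau_eq S g n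
  have hBdisj : Pairwise (Function.onFun Disjoint B) := by
    intro a b hab
    simp only [Function.onFun, hB]
    rw [Set.disjoint_left]
    intro ω ha hb
    simp only [Set.mem_setOf_eq] at ha hb
    exact hab (by exact_mod_cast ha.symm.trans hb)
  set U : Set (ℕ → S) := ⋃ n, B n with hU
  have hUmeas : MeasurableSet U := MeasurableSet.iUnion hBmeas
  have hcompl : μ Uᶜ = 0 := by
    by_contra hc
    have hconst : ∀ ω ∈ Uᶜ, ((tau S g ω : ℕ∞) : ℝ≥0∞) = ⊤ := by
      intro ω hω
      have htau : tau S g ω = ⊤ := by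
        cases hts : tau S g ω with
        | top => rfl
        | coe m =>
          exact absurd (Set.mem_iUnion.mpr ⟨m, hts⟩) hω
      rw [htau, ENat.toENNReal_top]
    have htop' : ∫⁻ ω in Uᶜ, ((tau S g ω : ℕ∞) : ℝ≥0∞) ∂μ = ⊤ := by
      rw [setLIntegral_congr_fun hUmeas.compl hconst, setLIntegral_const,
        ENNReal.top_mul hc]
    have hle : (⊤ : ℝ≥0∞) ≤ mfpt S μ g := htop' ▸ setLIntegral_le_lintegral _ _
    exact (ne_of_lt hg) (top_le_iff.mp hle)
  have key : ∀ n : ℕ, ∫⁻ ω in B n, ((tau S (g*h) ω : ℕ∞) : ℝ≥0∞) ∂μ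
      ≤ (n : ℝ≥0∞) * μ (B n) + μ (B n) * mfpt S μ h := by
    intro n
    have hdet : ∀ ω ω' : ℕ → S, (∀ i : Fin n, ω (i:ℕ) = ω' (i:ℕ)) → ω ∈ B n → ω' ∈ B n := by
      intro ω ω' hag hω
      simp only [hB, Set.mem_setOf_eq, tau_eq_coe_iff] at hω ⊢
      have hwalk : ∀ k ≤ n, walk S ω k = walk S ω' k := by
        intro k hk
        exact walk_congr S (fun i hi => hag ⟨i, lt_of_lt_of_le hi hk⟩)
      refine ⟨?_, ?_⟩
      · rw [← hwalk n le_rfl]; exact hω.1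
      · intro k hk; rw [← hwalk k hk.le]; exact hω.2 k hk
    set A : Finset (Fin n → S) := Finset.univ.filter
        (fun w : Fin n → S => ∃ ω ∈ B n, ∀ i : Fin n, ω (i:ℕ) = w i) with hA
    have hBn : B n = ⋃ w ∈ A, cyl S n w := eq_biUnion_cyl S (B n) hdet
    have hAdisj : (↑A : Set (Fin n → S)).PairwiseDisjoint (fun w => cyl S n w) :=
      fun w _ w' _ hne => disjoint_cyl S hne
    have hAmeas : ∀ w ∈ A, MeasurableSet (cyl S n w) := fun w _ => measurableSet_cyl S w
    have hpt : ∀ ω ∈ B n, ((tau S (g*h) ω : ℕ∞) : ℝ≥0∞)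
        ≤ (n : ℝ≥0∞) + ((tau S h (theta S n ω) : ℕ∞) : ℝ≥0∞) := by
      intro ω hω
      have hwn : walk S ω n = g := ((tau_eq_coe_iff S).mp hω).1
      cases hth : tau S h (theta S n ω) with
      | top => rw [ENat.toENNReal_top, add_top]; exact le_top
      | coe m =>
        have hwm : walk S (theta S n ω) m = h := ((tau_eq_coe_iff S).mp hth).1
        have hwnm : walk S ω (n+m) = g * h := by rw [walk_add, hwn, hwm]
        have hle := tau_le S hwnm
        calc ((tau S (g*h) ω : ℕ∞) : ℝ≥0∞) ≤ (((n+m : ℕ) : ℕ∞) : ℝ≥0∞) :=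
              ENat.toENNReal_le.mpr hle
          _ = (n : ℝ≥0∞) + (m : ℝ≥0∞) := by rw [ENat.toENNReal_coe]; push_cast; ring
          _ = (n : ℝ≥0∞) + ((m : ℕ∞) : ℝ≥0∞) := by rw [ENat.toENNReal_coe]
    calc ∫⁻ ω in B n, ((tau S (g*h) ω : ℕ∞) : ℝ≥0∞) ∂μ
        ≤ ∫⁻ ω in B n, ((n : ℝ≥0∞) + ((tau S h (theta S n ω) : ℕ∞) : ℝ≥0∞)) ∂μ :=
          setLIntegral_mono' (hBmeas n) hpt
      _ = (n : ℝ≥0∞) * μ (B n)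
            + ∫⁻ ω in B n, ((tau S h (theta S n ω) : ℕ∞) : ℝ≥0∞) ∂μ := by
          rw [lintegral_add_left measurable_const, setLIntegral_const]
      _ = (n : ℝ≥0∞) * μ (B n) + μ (B n) * mfpt S μ h := by
          congr 1
          rw [hBn, lintegral_biUnion_finset hAdisj hAmeas,
            Finset.sum_congr rfl
              (fun w _ => lintegral_cyl_shift S μ hcyl n w (measurable_tauENN S h)),
            ← Finset.sum_mul, ← measure_biUnion_finset hAdisj hAmeas]
          rfl
  have hdecomp : mfpt S μ (g*h) = ∑' n, ∫⁻ ω in B n, ((tau S (g*h) ω : ℕ∞) : ℝ≥0∞) ∂μ := by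
    rw [mfpt, ← lintegral_add_compl _ hUmeas, setLIntegral_measure_zero _ _ hcompl, add_zero,
      hU, lintegral_iUnion hBmeas hBdisj]
  rw [hdecomp]
  calc ∑' n, ∫⁻ ω in B n, ((tau S (g*h) ω : ℕ∞) : ℝ≥0∞) ∂μ
      ≤ ∑' n : ℕ, ((n : ℝ≥0∞) * μ (B n) + μ (B n) * mfpt S μ h) := ENNReal.tsum_le_tsum key
    _ = (∑' n : ℕ, (n : ℝ≥0∞) * μ (B n)) + ∑' n : ℕ, μ (B n) * mfpt S μ h := ENNReal.tsum_add
    _ ≤ mfpt S μ g + mfpt S μ h := by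
        apply add_le_add
        · have heq : ∀ n : ℕ, (n : ℝ≥0∞) * μ (B n)
              = ∫⁻ ω in B n, ((tau S g ω : ℕ∞) : ℝ≥0∞) ∂μ := by
            intro n
            rw [setLIntegral_congr_fun (hBmeas n) ((fun ω hω => by
              have : tau S g ω = (n : ℕ∞) := hω
              rw [this, ENat.toENNReal_coe])), setLIntegral_const]
          rw [tsum_congr heq, ← lintegral_iUnion hBmeas hBdisj]
          exact setLIntegral_le_lintegral _ _
        · rw [ENNReal.tsum_mul_right, ← measure_iUnion hBdisj hBmeas]
          calc μ (⋃ n, B n) * mfpt S μ h ≤ 1 * mfpt S μ h :=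
                mul_le_mul_left prob_le_one _
            _ = mfpt S μ h := one_mul _
end

section
/- If the generating set S is closed under inverses (S = S⁻¹), then the mean first passage time distance on the Cayley graph is symmetric: d(g) = d(g⁻¹) for all g ∈ G, i.e., the MFPT from g to the identity equals the MFPT from the identity to g. -/
open MeasureTheory
open scoped ENNReal

set_option linter.unusedSectionVars false
set_option maxHeartbeats 1000000

namespace MfptAux
open Finset

section
variable {G : Type*} [Group G] [DecidableEq G] (S : Finset G)

def words : ℕ → Finset (List G)
  | 0 => {[]}
  | n+1 => ((S ×ˢ words n).image fun p => p.1 :: p.2)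

lemma mem_words {n : ℕ} {l : List G} :
    l ∈ words S n ↔ l.length = n ∧ ∀ x ∈ l, x ∈ S := by
  induction n generalizing l with
  | zero => cases l <;> simp [words]
  | succ n ih =>
    cases l with
    | nil => simp [words]
    | cons a l =>
      simp [words, ih, and_comm, and_assoc, eq_comm (a := a)]
      tauto

lemma card_words (n : ℕ) : (words S n).card = S.card ^ n := by
  induction n with
  | zero => simp [words]
  | succ n ih =>
    rw [words, Finset.card_image_of_injective _ (fun p q h => ?_), Finset.card_product, ih,
      pow_succ, mul_comm]
    exact Prod.ext (by simpa using congrArg List.head? h) (by simpa using congrArg List.tail h)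

lemma take_mem_words {k m : ℕ} {l : List G} (h : l ∈ words S (k + m)) :
    l.take k ∈ words S k := by
  rw [mem_words] at h ⊢
  exact ⟨by simp [h.1], fun x hx => h.2 x (List.mem_of_mem_take hx)⟩

lemma drop_mem_words {k m : ℕ} {l : List G} (h : l ∈ words S (k + m)) :
    l.drop k ∈ words S m := by
  rw [mem_words] at h ⊢
  exact ⟨by simp [h.1], fun x hx => h.2 x (List.mem_of_mem_drop hx)⟩

lemma append_mem_words {k m : ℕ} {l₁ l₂ : List G} (h₁ : l₁ ∈ words S k) (h₂ : l₂ ∈ words S m) :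
    l₁ ++ l₂ ∈ words S (k + m) := by
  rw [mem_words] at h₁ h₂ ⊢
  refine ⟨by simp [h₁.1, h₂.1], fun x hx => ?_⟩
  rcases List.mem_append.1 hx with h | h
  exacts [h₁.2 x h, h₂.2 x h]

lemma len_words {n : ℕ} {l : List G} (h : l ∈ words S n) : l.length = n :=
  ((mem_words S).1 h).1

lemma split_count {k m : ℕ} (P Q : List G → Prop) [DecidablePred P] [DecidablePred Q] :
    ((words S (k + m)).filter fun l => P (l.take k) ∧ Q (l.drop k)).card
      = ((words S k).filter P).card * ((words S m).filter Q).card := by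
  rw [← Finset.card_product]
  refine Finset.card_bij' (fun l _ => (l.take k, l.drop k)) (fun p _ => p.1 ++ p.2)
    ?_ ?_ ?_ ?_
  · intro l hl
    simp only [Finset.mem_filter, Finset.mem_product] at hl ⊢
    exact ⟨⟨take_mem_words S hl.1, hl.2.1⟩, ⟨drop_mem_words S hl.1, hl.2.2⟩⟩
  · intro p hp
    simp only [Finset.mem_filter, Finset.mem_product] at hp ⊢
    have hlen : p.1.length = k := len_words S hp.1.1
    exact ⟨append_mem_words S hp.1.1 hp.2.1,
      by rw [List.take_left' hlen]; exact hp.1.2,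
      by rw [List.drop_left' hlen]; exact hp.2.2⟩
  · intro l _; exact List.take_append_drop k l
  · intro p hp
    simp only [Finset.mem_filter, Finset.mem_product] at hp
    have hlen : p.1.length = k := len_words S hp.1.1
    exact Prod.ext (List.take_left' hlen) (List.drop_left' hlen)
end

section
variable {G : Type*} [Group G] [DecidableEq G] (S : Finset G)

def bcnt (n : ℕ) (g : G) : ℕ := ((words S n).filter fun l => l.prod = g).card

def fcnt (n : ℕ) (g : G) : ℕ :=
  ((words S n).filter fun l => l.prod = g ∧ ∀ k < n, (l.take k).prod ≠ g).card

def acnt (n : ℕ) (g : G) : ℕ :=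
  ((words S n).filter fun l => ∀ k ≤ n, (l.take k).prod ≠ g).card

/-- the "first hit at time k" piece inside words of length n -/
def piece (n k : ℕ) (g : G) : Finset (List G) :=
  (words S n).filter fun l => (l.take k).prod = g ∧ ∀ j < k, (l.take j).prod ≠ g

lemma card_piece_prod (k m : ℕ) (g : G) :
    ((piece S (k + m) k g).filter fun l => l.prod = g).card = fcnt S k g * bcnt S m 1 := by
  rw [fcnt, bcnt, ← split_count]
  rw [piece, Finset.filter_filter]
  refine congrArg Finset.card (Finset.filter_congr ?_)
  intro l hl
  have hlen : l.length = k + m := len_words S hl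
  have htt : ∀ j, j < k → (l.take k).take j = l.take j := by
    intro j hj
    rw [List.take_take, min_eq_left hj.le]
  constructor
  · rintro ⟨⟨h1, h2⟩, h3⟩
    refine ⟨⟨h1, fun j hj => by rw [htt j hj]; exact h2 j hj⟩, ?_⟩
    have := List.prod_take_mul_prod_drop l k
    rw [h1, h3] at this
    exact mul_left_cancel (a := g) (by rw [this, mul_one])
  · rintro ⟨⟨h1, h2⟩, h3⟩
    refine ⟨⟨h1, fun j hj => by rw [← htt j hj]; exact h2 j hj⟩, ?_⟩
    have := List.prod_take_mul_prod_drop l k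
    rw [h1, h3, mul_one] at this
    exact this.symm

lemma card_piece (k m : ℕ) (g : G) :
    (piece S (k + m) k g).card = fcnt S k g * S.card ^ m := by
  have : (piece S (k + m) k g) = (words S (k + m)).filter
      fun l => ((l.take k).prod = g ∧ ∀ j < k, ((l.take k).take j).prod ≠ g) ∧ True := by
    rw [piece]
    apply Finset.filter_congr
    intro l hl
    have htt : ∀ j, j < k → (l.take k).take j = l.take j := by
      intro j hj
      rw [List.take_take, min_eq_left hj.le]
    constructor
    · rintro ⟨h1, h2⟩
      exact ⟨⟨h1, fun j hj => by rw [htt j hj]; exact h2 j hj⟩, trivial⟩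
    · rintro ⟨⟨h1, h2⟩, -⟩
      exact ⟨h1, fun j hj => by rw [← htt j hj]; exact h2 j hj⟩
  rw [this, fcnt]
  have hsplit := split_count S (k := k) (m := m)
    (fun u => u.prod = g ∧ ∀ j < k, (u.take j).prod ≠ g) (fun _ => True)
  rw [Finset.filter_true] at hsplit
  calc ((words S (k+m)).filter fun l => ((l.take k).prod = g ∧
        ∀ j < k, ((l.take k).take j).prod ≠ g) ∧ True).card
      = ((words S k).filter fun u => u.prod = g ∧ ∀ j < k, (u.take j).prod ≠ g).card
        * (words S m).card := hsplit
    _ = _ := by rw [card_words]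


lemma piece_disjoint (n : ℕ) (g : G) {k k' : ℕ} (h : k ≠ k') :
    Disjoint (piece S n k g) (piece S n k' g) := by
  have key : ∀ k k' : ℕ, k < k' → Disjoint (piece S n k g) (piece S n k' g) := by
    intro k k' hkk'
    rw [Finset.disjoint_left]
    intro l h1 h2
    rw [piece, Finset.mem_filter] at h1 h2
    exact h2.2.2 k hkk' h1.2.1
  rcases h.lt_or_gt with h | h
  exacts [key _ _ h, (key _ _ h).symm]

lemma take_n_prod {n : ℕ} {l : List G} (hw : l ∈ words S n) : (l.take n).prod = l.prod := by
  rw [← len_words S hw, List.take_length]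

lemma renewal (n : ℕ) (g : G) :
    bcnt S n g = ∑ k ∈ Finset.range (n+1), fcnt S k g * bcnt S (n-k) 1 := by
  have hset : (words S n).filter (fun l => l.prod = g)
      = (Finset.range (n+1)).biUnion
          (fun k => (piece S n k g).filter fun l => l.prod = g) := by
    ext l
    simp only [Finset.mem_filter, Finset.mem_biUnion, Finset.mem_range, piece]
    constructor
    · rintro ⟨hw, hp⟩
      have hex : ∃ k, (l.take k).prod = g := ⟨n, by rw [take_n_prod S hw, hp]⟩
      refine ⟨Nat.find hex, Nat.lt_succ_of_le (Nat.find_min' hex ?_),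
        ⟨⟨hw, Nat.find_spec hex, fun j hj => Nat.find_min hex hj⟩, hp⟩⟩
      rw [take_n_prod S hw, hp]
    · rintro ⟨k, -, ⟨hw, -, -⟩, hp⟩
      exact ⟨hw, hp⟩
  rw [bcnt, hset, Finset.card_biUnion]
  · refine Finset.sum_congr rfl fun k hk => ?_
    have hkm : k + (n - k) = n := by
      have := Finset.mem_range.1 hk; omega
    have := card_piece_prod S k (n-k) g
    rw [hkm] at this
    exact this
  · intro k _ k' _ h
    exact Finset.disjoint_filter_filter (piece_disjoint S n g h)

lemma total (n : ℕ) (g : G) :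
    S.card ^ n = acnt S n g + ∑ k ∈ Finset.range (n+1), fcnt S k g * S.card ^ (n-k) := by
  have hdisj2 : ∀ k ∈ Finset.range (n+1), ∀ k' ∈ Finset.range (n+1), k ≠ k' →
      Disjoint (piece S n k g) (piece S n k' g) := fun k _ k' _ h => piece_disjoint S n g h
  have hset : words S n = ((words S n).filter fun l => ∀ k ≤ n, (l.take k).prod ≠ g)
      ∪ (Finset.range (n+1)).biUnion (fun k => piece S n k g) := by
    ext l
    simp only [Finset.mem_union, Finset.mem_filter, Finset.mem_biUnion, Finset.mem_range, piece]
    constructor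
    · intro hw
      by_cases hc : ∀ k ≤ n, (l.take k).prod ≠ g
      · exact Or.inl ⟨hw, hc⟩
      · push_neg at hc
        obtain ⟨k, hkn, hkp⟩ := hc
        have hex : ∃ k, (l.take k).prod = g := ⟨k, hkp⟩
        refine Or.inr ⟨Nat.find hex, Nat.lt_succ_of_le ((Nat.find_min' hex hkp).trans hkn),
          hw, Nat.find_spec hex, fun j hj => Nat.find_min hex hj⟩
    · rintro (⟨hw, -⟩ | ⟨k, -, hw, -, -⟩) <;> exact hw
  have hdisj : Disjoint ((words S n).filter fun l => ∀ k ≤ n, (l.take k).prod ≠ g)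
      ((Finset.range (n+1)).biUnion (fun k => piece S n k g)) := by
    rw [Finset.disjoint_left]
    intro l h1 h2
    rw [Finset.mem_filter] at h1
    rw [Finset.mem_biUnion] at h2
    obtain ⟨k, hk, hpk⟩ := h2
    rw [piece, Finset.mem_filter] at hpk
    exact h1.2 k (Nat.lt_succ_iff.1 (Finset.mem_range.1 hk)) hpk.2.1
  have := congrArg Finset.card hset
  rw [Finset.card_union_of_disjoint hdisj, Finset.card_biUnion hdisj2, card_words] at this
  rw [this, acnt]
  congr 1
  refine Finset.sum_congr rfl fun k hk => ?_
  have hkm : k + (n - k) = n := by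
    have := Finset.mem_range.1 hk; omega
  have := card_piece S k (n-k) g
  rw [hkm] at this
  exact this

variable (hinv : ∀ s ∈ S, s⁻¹ ∈ S)

include hinv in
lemma bcnt_symm (n : ℕ) (g : G) : bcnt S n g = bcnt S n g⁻¹ := by
  have hmem : ∀ (h : G) (l : List G), l ∈ (words S n).filter (fun l => l.prod = h) →
      (l.map (·⁻¹)).reverse ∈ (words S n).filter (fun l => l.prod = h⁻¹) := by
    intro h l hl
    rw [Finset.mem_filter, mem_words] at hl ⊢
    refine ⟨⟨by simp [hl.1.1], fun x hx => ?_⟩, ?_⟩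
    · simp only [List.mem_reverse, List.mem_map] at hx
      obtain ⟨y, hy, rfl⟩ := hx
      exact hinv y (hl.1.2 y hy)
    · rw [← List.prod_inv_reverse, hl.2]
  have hinvo : ∀ l : List G, ((l.map (·⁻¹)).reverse.map (·⁻¹)).reverse = l := by
    intro l
    simp [List.map_reverse, List.map_map, Function.comp]
  rw [bcnt, bcnt]
  refine Finset.card_bij' (fun l _ => (l.map (·⁻¹)).reverse) (fun l _ => (l.map (·⁻¹)).reverse)
    (hmem g) ?_ (fun l _ => hinvo l) (fun l _ => hinvo l)
  have := hmem g⁻¹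
  rwa [inv_inv] at this

lemma bcnt_zero_one : bcnt S 0 1 = 1 := by
  simp [bcnt, words, Finset.filter_singleton]

include hinv in
lemma fcnt_symm : ∀ n g, fcnt S n g = fcnt S n g⁻¹ := by
  intro n
  induction n using Nat.strong_induction_on with
  | _ n ih =>
    intro g
    have h1 := renewal S n g
    have h2 := renewal S n g⁻¹
    rw [Finset.sum_range_succ, Nat.sub_self, bcnt_zero_one, mul_one] at h1 h2
    have hsum : ∑ k ∈ Finset.range n, fcnt S k g * bcnt S (n-k) 1
        = ∑ k ∈ Finset.range n, fcnt S k g⁻¹ * bcnt S (n-k) 1 := by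
      refine Finset.sum_congr rfl fun k hk => ?_
      rw [ih k (Finset.mem_range.1 hk) g]
    rw [bcnt_symm S hinv n g, h2, ← hsum] at h1
    omega

include hinv in
lemma acnt_symm (n : ℕ) (g : G) : acnt S n g = acnt S n g⁻¹ := by
  have h1 := total S n g
  have h2 := total S n g⁻¹
  have hsum : ∑ k ∈ Finset.range (n+1), fcnt S k g * S.card ^ (n-k)
      = ∑ k ∈ Finset.range (n+1), fcnt S k g⁻¹ * S.card ^ (n-k) := by
    refine Finset.sum_congr rfl fun k _ => ?_
    rw [fcnt_symm S hinv k g]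
  rw [h2, ← hsum] at h1
  omega
end

section
set_option linter.unusedSectionVars false
variable {G : Type*} [Group G] [DecidableEq G] (S : Finset G)

lemma tau_gt_iff (g : G) (ω : ℕ → S) (n : ℕ) :
    (n : ℕ∞) < tau S g ω ↔ ∀ k ≤ n, walk S ω k ≠ g := by
  constructor
  · intro h k hk hw
    have : tau S g ω ≤ (k : ℕ∞) := sInf_le ⟨k, hw, rfl⟩
    have : tau S g ω ≤ (n : ℕ∞) := this.trans (by exact_mod_cast hk)
    exact absurd (h.trans_le this) (lt_irrefl _)
  · intro h
    have : ((n+1 : ℕ) : ℕ∞) ≤ tau S g ω := by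
      apply le_sInf
      rintro x ⟨m, hm, rfl⟩
      by_contra hc
      push_neg at hc
      have hmn : m ≤ n := by
        have : m < n + 1 := by exact_mod_cast hc
        omega
      exact h m hmn hm
    refine lt_of_lt_of_le ?_ this
    exact_mod_cast Nat.lt_succ_self n

lemma walk_take (ω : ℕ → S) {k n : ℕ} (h : k ≤ n) :
    ((List.ofFn fun i : Fin n => (ω i : G)).take k).prod = walk S ω k := by
  rw [← Fin.ofFn_take_eq_take_ofFn h, walk]
  rfl
end

section
set_option linter.unusedSectionVars false
variable {G : Type*} [Group G] [DecidableEq G] (S : Finset G)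

/-- cylinder set -/
def cyl {n : ℕ} (w : Fin n → S) : Set (ℕ → S) := {ω | ∀ i : Fin n, ω (i : ℕ) = w i}

lemma measurableSet_cyl {n : ℕ} (w : Fin n → S) : MeasurableSet (cyl S w) := by
  have : cyl S w = ⋂ i : Fin n, (fun ω : ℕ → S => ω (i:ℕ)) ⁻¹' {w i} := by
    ext ω; simp [cyl]
  rw [this]
  exact MeasurableSet.iInter fun i =>
    (measurable_pi_apply (i : ℕ)) (by trivial)

lemma cyl_disjoint {n : ℕ} {w w' : Fin n → S} (h : w ≠ w') :
    Disjoint (cyl S w) (cyl S w') := by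
  rw [Set.disjoint_left]
  intro ω h1 h2
  exact h (funext fun i => (h1 i).symm.trans (h2 i))

/-- the word finset corresponding to predicate `P` at time `n` -/
def wfin (n : ℕ) (P : List G → Prop) [DecidablePred P] : Finset (Fin n → S) :=
  Finset.univ.filter fun w => P (List.ofFn fun i => (w i : G))

lemma event_eq (n : ℕ) (P : List G → Prop) [DecidablePred P] :
    {ω : ℕ → S | P (List.ofFn fun i : Fin n => (ω i : G))}
      = ⋃ w ∈ wfin S n P, cyl S w := by
  ext ω
  simp only [Set.mem_setOf_eq, Set.mem_iUnion, wfin, Finset.mem_filter, Finset.mem_univ,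
    true_and]
  constructor
  · intro h
    exact ⟨fun i => ω i, h, fun i => rfl⟩
  · rintro ⟨w, hP, hc⟩
    have : (List.ofFn fun i : Fin n => (ω i : G)) = List.ofFn fun i => (w i : G) := by
      apply congrArg
      funext i
      rw [hc i]
    rw [this]
    exact hP

lemma measurableSet_event (n : ℕ) (P : List G → Prop) [DecidablePred P] :
    MeasurableSet {ω : ℕ → S | P (List.ofFn fun i : Fin n => (ω i : G))} := by
  rw [event_eq]
  exact (wfin S n P).measurableSet_biUnion fun w _ => measurableSet_cyl S w
end

section
set_option linter.unusedSectionVars false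
variable {G : Type*} [Group G] [DecidableEq G] (S : Finset G)

lemma card_wfin (n : ℕ) (P : List G → Prop) [DecidablePred P] :
    (wfin S n P).card = ((words S n).filter P).card := by
  refine Finset.card_bij (fun w _ => List.ofFn fun i => (w i : G)) ?_ ?_ ?_
  · intro w hw
    rw [wfin, Finset.mem_filter] at hw
    rw [Finset.mem_filter]
    refine ⟨(mem_words S).2 ⟨List.length_ofFn, fun x hx => ?_⟩, hw.2⟩
    rw [List.mem_ofFn] at hx
    obtain ⟨i, rfl⟩ := hx
    exact (w i).2
  · intro w1 h1 w2 h2 h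
    have := List.ofFn_inj.1 h
    funext i
    exact Subtype.ext (congrFun this i)
  · intro l hl
    rw [Finset.mem_filter] at hl
    obtain ⟨hlw, hlP⟩ := hl
    have hlen : l.length = n := len_words S hlw
    have hmem : ∀ i : Fin n, l.get (Fin.cast hlen.symm i) ∈ S :=
      fun i => ((mem_words S).1 hlw).2 _ (List.mem_iff_get.2 ⟨_, rfl⟩)
    have hofn : (List.ofFn fun i : Fin n => l.get (Fin.cast hlen.symm i)) = l := by
      apply List.ext_get (by simp [hlen])
      intro i h1 h2
      simp
    refine ⟨fun i => ⟨l.get (Fin.cast hlen.symm i), hmem i⟩, ?_, hofn⟩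
    rw [wfin, Finset.mem_filter]
    exact ⟨Finset.mem_univ _, by rw [hofn]; exact hlP⟩

lemma measure_event {μ : Measure (ℕ → S)} (hμ : IsUniformProductMeasure S μ)
    (n : ℕ) (P : List G → Prop) [DecidablePred P] :
    μ {ω : ℕ → S | P (List.ofFn fun i : Fin n => (ω i : G))}
      = (((words S n).filter P).card : ℝ≥0∞) * ((S.card : ℝ≥0∞))⁻¹ ^ n := by
  rw [event_eq, measure_biUnion_finset ?_ (fun w _ => measurableSet_cyl S w)]
  · have hval : ∀ w ∈ wfin S n P, μ (cyl S w) = ((S.card : ℝ≥0∞))⁻¹ ^ n :=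
      fun w _ => hμ.2 n w
    rw [Finset.sum_congr rfl hval, Finset.sum_const, nsmul_eq_mul, card_wfin]
  · intro w hw w' hw' h
    exact cyl_disjoint S h

lemma tail_event (g : G) (n : ℕ) :
    {ω : ℕ → S | (n : ℕ∞) < tau S g ω}
      = {ω : ℕ → S | (fun l : List G => ∀ k ≤ n, (l.take k).prod ≠ g)
          (List.ofFn fun i : Fin n => (ω i : G))} := by
  ext ω
  simp only [Set.mem_setOf_eq, tau_gt_iff]
  constructor
  · intro h k hk
    rw [walk_take S ω hk]
    exact h k hk
  · intro h k hk
    rw [← walk_take S ω hk]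
    exact h k hk

lemma enat_tsum (m : ℕ∞) :
    ∑' n : ℕ, (if (n : ℕ∞) < m then (1 : ℝ≥0∞) else 0) = (m : ℝ≥0∞) := by
  cases m with
  | top =>
    have : ∀ n : ℕ, (if ((n : ℕ∞) < (⊤ : ℕ∞)) then (1 : ℝ≥0∞) else 0) = 1 := by
      intro n
      rw [if_pos (lt_top_iff_ne_top.2 (ENat.coe_ne_top n))]
    rw [tsum_congr this, ENNReal.tsum_const_eq_top_of_ne_zero one_ne_zero]
    simp
  | coe k =>
    have hz : ∀ n ∉ Finset.range k, (if ((n:ℕ∞) < (k:ℕ∞)) then (1:ℝ≥0∞) else 0) = 0 := by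
      intro n hn
      rw [Finset.mem_range, not_lt] at hn
      exact if_neg (not_lt.2 (by exact_mod_cast hn))
    rw [tsum_eq_sum hz]
    have hone : ∀ n ∈ Finset.range k, (if ((n:ℕ∞) < (k:ℕ∞)) then (1:ℝ≥0∞) else 0) = 1 := by
      intro n hn
      rw [if_pos (by exact_mod_cast Finset.mem_range.1 hn)]
    rw [Finset.sum_congr rfl hone, Finset.sum_const, nsmul_eq_mul, mul_one]
    simp

lemma mfpt_eq_tsum {μ : Measure (ℕ → S)} (hμ : IsUniformProductMeasure S μ) (g : G) :
    mfpt S μ g = ∑' n : ℕ, (acnt S n g : ℝ≥0∞) * ((S.card : ℝ≥0∞))⁻¹ ^ n := by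
  have hmeasn : ∀ n : ℕ, MeasurableSet {ω : ℕ → S | (n : ℕ∞) < tau S g ω} := by
    intro n
    rw [tail_event]
    exact measurableSet_event S n (fun l => ∀ k ≤ n, (l.take k).prod ≠ g)
  have h1 : ∀ ω : ℕ → S, ((tau S g ω : ℝ≥0∞))
      = ∑' n : ℕ, Set.indicator {ω' : ℕ → S | (n:ℕ∞) < tau S g ω'} (fun _ => 1) ω := by
    intro ω
    rw [← enat_tsum (tau S g ω)]
    refine tsum_congr fun n => ?_
    rw [Set.indicator_apply]
    simp only [Set.mem_setOf_eq]
  rw [mfpt, lintegral_congr h1, lintegral_tsum (fun n =>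
    ((measurable_const.indicator (hmeasn n)).aemeasurable))]
  refine tsum_congr fun n => ?_
  rw [lintegral_indicator_const (hmeasn n), one_mul, tail_event, measure_event S hμ n (fun l => ∀ k ≤ n, (l.take k).prod ≠ g)]
  rfl

end

end MfptAux

/-- if the generating set is closed under inverses, the MFPT distance is
symmetric: `d(g) = d(g⁻¹)` for all `g ∈ G`. -/
theorem mfpt_symm {G : Type*} [Group G] [Fintype G] [DecidableEq G]
    (S : Finset G) (hgen : Subgroup.closure (S : Set G) = ⊤) (hone : (1 : G) ∉ S)
    (hinv : ∀ s ∈ S, s⁻¹ ∈ S)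
    (μ : Measure (ℕ → S)) (hμ : IsUniformProductMeasure S μ) (g : G) :
    mfpt S μ g = mfpt S μ g⁻¹ := by
  rw [MfptAux.mfpt_eq_tsum S hμ g, MfptAux.mfpt_eq_tsum S hμ g⁻¹]
  refine tsum_congr fun n => ?_
  rw [MfptAux.acnt_symm S hinv n g]
end

section
/- Suppose σ ∈ G normalises the generating set, i.e., σ⁻¹·S·σ = S. Then for every g ∈ G the mean first passage time from the identity to σ⁻¹·g·σ equals the mean first passage time from the identity to g: d(σ⁻¹·g·σ) = d(g). In particular, two group elements in the same orbit of the conjugation action of the normaliser N_G(S) have the same mean first passage time. -/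
open MeasureTheory
open scoped ENNReal

section Aux
variable {G : Type*} [Group G] (S : Finset G)

set_option linter.unusedSectionVars false

/-- Cylinder sets. -/
def cylSet (n : ℕ) (w : Fin n → S) : Set (ℕ → S) := {ω | ∀ i : Fin n, ω (i : ℕ) = w i}

def cylSets : Set (Set (ℕ → S)) := {A | ∃ n, ∃ w : Fin n → S, A = cylSet S n w}

lemma measurableSet_cylSet (n : ℕ) (w : Fin n → S) : MeasurableSet (cylSet S n w) := by
  have : cylSet S n w = ⋂ i : Fin n, (fun ω : ℕ → S => ω (i : ℕ)) ⁻¹' {w i} := by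
    ext ω; simp [cylSet]
  rw [this]
  exact MeasurableSet.iInter fun i =>
    (measurable_pi_apply (i : ℕ)) MeasurableSpace.measurableSet_top

lemma isPiSystem_cylSets : IsPiSystem (cylSets S) := by
  rintro A ⟨n, w, rfl⟩ B ⟨m, v, rfl⟩ hne
  wlog h : n ≤ m generalizing n m w v
  · rw [Set.inter_comm] at hne ⊢
    exact this m v n w hne (le_of_not_ge h)
  obtain ⟨ω₀, hw, hv⟩ := hne
  refine ⟨m, v, ?_⟩
  ext ρ
  simp only [cylSet, Set.mem_inter_iff, Set.mem_setOf_eq]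
  constructor
  · rintro ⟨-, h2⟩; exact h2
  · intro h2
    refine ⟨fun i => ?_, h2⟩
    have hwv : w i = v ⟨(i : ℕ), lt_of_lt_of_le i.2 h⟩ := by
      rw [← hw i, hv ⟨(i : ℕ), lt_of_lt_of_le i.2 h⟩]
    rw [hwv]
    exact h2 ⟨(i : ℕ), lt_of_lt_of_le i.2 h⟩

lemma pi_eq_generateFrom_cyl :
    (inferInstance : MeasurableSpace (ℕ → S)) = .generateFrom (cylSets S) := by
  refine le_antisymm ?_ (MeasurableSpace.generateFrom_le ?_)
  · have hev : ∀ k : ℕ, @Measurable _ _ (.generateFrom (cylSets S)) _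
        (fun ω : ℕ → S => ω k) := by
      intro k t _
      have : (fun ω : ℕ → S => ω k) ⁻¹' t =
          ⋃ (w : Fin (k+1) → S) (_ : w ⟨k, Nat.lt_succ_self k⟩ ∈ t), cylSet S (k+1) w := by
        ext ω
        simp only [Set.mem_preimage, Set.mem_iUnion, cylSet, Set.mem_setOf_eq]
        constructor
        · intro hωk
          exact ⟨fun i => ω (i : ℕ), hωk, fun i => rfl⟩
        · rintro ⟨w, hwt, hω⟩
          have := hω ⟨k, Nat.lt_succ_self k⟩
          simp only at this
          rw [this]; exact hwt
      rw [this]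
      exact MeasurableSet.iUnion fun w => MeasurableSet.iUnion fun hw =>
        MeasurableSpace.measurableSet_generateFrom ⟨k+1, w, rfl⟩
    have hid : @Measurable _ _ (.generateFrom (cylSets S)) _ (id : (ℕ → S) → ℕ → S) :=
      (@measurable_pi_iff _ _ _ (.generateFrom (cylSets S)) _ (id : (ℕ → S) → ℕ → S)).mpr hev
    intro s hs
    simpa using hid hs
  · rintro A ⟨n, w, rfl⟩
    exact measurableSet_cylSet S n w

lemma walk_succ (ω : ℕ → S) (n : ℕ) :
    walk S ω (n + 1) = walk S ω n * (ω n : G) := by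
  unfold walk
  rw [List.ofFn_succ', List.concat_eq_append, List.prod_append, List.prod_cons, List.prod_nil]
  simp

end Aux

/-- if `σ` normalises the generating set, i.e. `σ⁻¹·S·σ = S`, then for every
`g ∈ G` the mean first passage time satisfies `d(σ⁻¹·g·σ) = d(g)`; in particular two
elements in the same orbit of the conjugation action of `N_G(S)` have the same MFPT. -/
theorem mfpt_conj_normalizer {G : Type*} [Group G] [Fintype G] [DecidableEq G]
    (S : Finset G) (hgen : Subgroup.closure (S : Set G) = ⊤) (hone : (1 : G) ∉ S)
    (σ : G) (hσ : ∀ s : G, σ⁻¹ * s * σ ∈ S ↔ s ∈ S)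
    (μ : Measure (ℕ → S)) (hμ : IsUniformProductMeasure S μ) (g : G) :
    mfpt S μ (σ⁻¹ * g * σ) = mfpt S μ g := by
  haveI : IsProbabilityMeasure μ := hμ.1
  -- the conjugation bijection on S
  have hmem : ∀ s : S, σ⁻¹ * (s : G) * σ ∈ S := fun s => (hσ s).mpr s.2
  have hmem' : ∀ s : S, σ * (s : G) * σ⁻¹ ∈ S := by
    intro s
    refine (hσ (σ * (s : G) * σ⁻¹)).mp ?_
    rw [show σ⁻¹ * (σ * (s : G) * σ⁻¹) * σ = (s : G) by group]
    exact s.2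
  let e : S ≃ S :=
    { toFun := fun s => ⟨σ⁻¹ * (s : G) * σ, hmem s⟩
      invFun := fun s => ⟨σ * (s : G) * σ⁻¹, hmem' s⟩
      left_inv := fun s => by ext; simp; group
      right_inv := fun s => by ext; simp; group }
  -- the coordinatewise measurable equivalence
  let Φ : (ℕ → S) ≃ᵐ (ℕ → S) :=
    { toEquiv := Equiv.piCongrRight fun _ : ℕ => e
      measurable_toFun := measurable_pi_lambda _ fun n =>
        (measurable_from_top (f := fun s : S => e s)).comp (measurable_pi_apply n)
      measurable_invFun := measurable_pi_lambda _ fun n =>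
        (measurable_from_top (f := fun s : S => e.symm s)).comp (measurable_pi_apply n) }
  -- Φ preserves μ
  have hmap : μ.map Φ = μ := by
    haveI : IsProbabilityMeasure (μ.map Φ) :=
      Measure.isProbabilityMeasure_map Φ.measurable.aemeasurable
    refine ext_of_generate_finite (cylSets S) (pi_eq_generateFrom_cyl S)
      (isPiSystem_cylSets S) ?_ (by simp)
    rintro A ⟨n, w, rfl⟩
    rw [Measure.map_apply Φ.measurable (measurableSet_cylSet S n w)]
    have hpre : (⇑Φ) ⁻¹' (cylSet S n w) =
        cylSet S n (fun i => ⟨σ * (w i : G) * σ⁻¹, hmem' (w i)⟩) := by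
      ext ω
      simp only [cylSet, Set.mem_preimage, Set.mem_setOf_eq]
      refine forall_congr' fun i => ?_
      rw [Subtype.ext_iff, Subtype.ext_iff]
      show σ⁻¹ * (ω (i : ℕ) : G) * σ = (w i : G) ↔ (ω (i : ℕ) : G) = σ * (w i : G) * σ⁻¹
      constructor
      · intro h; rw [← h]; group
      · intro h; rw [h]; group
    rw [hpre]
    have h1 := hμ.2 n (fun i => ⟨σ * (w i : G) * σ⁻¹, hmem' (w i)⟩)
    have h2 := hμ.2 n w
    rw [show cylSet S n (fun i => ⟨σ * (w i : G) * σ⁻¹, hmem' (w i)⟩) =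
      {ω : ℕ → S | ∀ i : Fin n, ω (i : ℕ) = ⟨σ * (w i : G) * σ⁻¹, hmem' (w i)⟩} from rfl, h1,
      show cylSet S n w = {ω : ℕ → S | ∀ i : Fin n, ω (i : ℕ) = w i} from rfl, h2]
  -- the walk transforms by conjugation
  have hwalk : ∀ (ω : ℕ → S) (n : ℕ), walk S (Φ ω) n = σ⁻¹ * walk S ω n * σ := by
    intro ω n
    induction n with
    | zero => simp [walk]
    | succ n ih =>
      rw [walk_succ, walk_succ, ih]
      show σ⁻¹ * walk S ω n * σ * (σ⁻¹ * (ω n : G) * σ) = σ⁻¹ * (walk S ω n * (ω n : G)) * σ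
      group
  -- the first passage time is preserved
  have htau : ∀ ω : ℕ → S, tau S (σ⁻¹ * g * σ) (Φ ω) = tau S g ω := by
    intro ω
    have hset : {n : ℕ | walk S (Φ ω) n = σ⁻¹ * g * σ} = {n : ℕ | walk S ω n = g} := by
      ext n
      simp only [Set.mem_setOf_eq, hwalk]
      constructor
      · intro h
        have h' : σ⁻¹ * (walk S ω n * σ) = σ⁻¹ * (g * σ) := by
          rw [← mul_assoc, ← mul_assoc]; exact h
        exact mul_right_cancel (mul_left_cancel h')
      · intro h; rw [h]
    unfold tau
    rw [hset]
  calc mfpt S μ (σ⁻¹ * g * σ)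
      = ∫⁻ ω, (tau S (σ⁻¹ * g * σ) ω : ℝ≥0∞) ∂(μ.map Φ) := by rw [hmap]; rfl
    _ = ∫⁻ ω, (tau S (σ⁻¹ * g * σ) (Φ ω) : ℝ≥0∞) ∂μ :=
        lintegral_map_equiv (fun ω => (tau S (σ⁻¹ * g * σ) ω : ℝ≥0∞)) Φ
    _ = mfpt S μ g := by
        unfold mfpt
        refine lintegral_congr fun ω => ?_
        rw [htau ω]
end

section
/- Let n be a finite index type, P a real n×n matrix such that I − P is invertible, and for each pair (i,j) let m_{ij} : ℝ → ℝ be a function differentiable at 0 with m_{ij}(0) = 1. Let Q(s) be the matrix with entries Q(s)_{ij} = P_{ij}·m_{ij}(s), and let M′ be the matrix with entries m′_{ij}(0). Then for each (i,j) the function s ↦ ((I − Q(s))⁻¹)_{ij} (using the ring inverse of matrices) is differentiable at 0 and its derivative at 0 equals ((I − P)⁻¹ · (P ∘ M′) · (I − P)⁻¹)_{ij}, where ∘ denotes the entrywise (Hadamard) product. -/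
attribute [local instance] Matrix.linftyOpNormedRing Matrix.linftyOpNormedAlgebra

section Aux

variable {n : Type*} [Fintype n] [DecidableEq n]

/-- The entry map as a linear map. -/
def entryLM (i j : n) : Matrix n n ℝ →ₗ[ℝ] ℝ where
  toFun A := A i j
  map_add' _ _ := rfl
  map_smul' _ _ := rfl

end Aux

/-- differentiating the entries of `(I − Q(s))⁻¹` at `s = 0`, where
`Q(s)_{ij} = P_{ij}·m_{ij}(s)` with `m_{ij}(0) = 1` and `m_{ij}` differentiable at `0`:
the derivative of `s ↦ ((I − Q(s))⁻¹)_{ij}` (ring inverse of matrices) at `0` equals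
`((I − P)⁻¹ · (P ∘ M′) · (I − P)⁻¹)_{ij}`, where `∘` is the Hadamard product and
`M′_{ij} = m′_{ij}(0)`. -/
theorem deriv_inverse_transmittance {n : Type*} [Fintype n] [DecidableEq n]
    (P : Matrix n n ℝ) (hP : IsUnit (1 - P))
    (m : n → n → ℝ → ℝ)
    (hm0 : ∀ i j, m i j 0 = 1)
    (hmd : ∀ i j, DifferentiableAt ℝ (m i j) 0)
    (Q : ℝ → Matrix n n ℝ)
    (hQ : ∀ s, Q s = Matrix.of fun i j => P i j * m i j s)
    (M' : Matrix n n ℝ)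
    (hM' : M' = Matrix.of fun i j => deriv (m i j) 0)
    (i j : n) :
    HasDerivAt (fun s : ℝ => Ring.inverse (1 - Q s) i j)
      ((Ring.inverse (1 - P) * (P.hadamard M') * Ring.inverse (1 - P)) i j) 0 := by
  classical
  set u := hP.unit with hu
  -- derivative of Q
  have hQrep : ∀ s, Q s = ∑ a : n, ∑ b : n,
      (P a b * m a b s) • Matrix.single a b (1 : ℝ) := by
    intro s
    rw [hQ s]
    conv_lhs => rw [Matrix.matrix_eq_sum_single (Matrix.of fun i j => P i j * m i j s)]
    simp [Matrix.smul_single]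
  have hQd : HasDerivAt Q (P.hadamard M') 0 := by
    have hrep' : (P.hadamard M') = ∑ a : n, ∑ b : n,
        (P a b * deriv (m a b) 0) • Matrix.single a b (1 : ℝ) := by
      conv_lhs => rw [Matrix.matrix_eq_sum_single (P.hadamard M')]
      simp [Matrix.smul_single, Matrix.hadamard, hM']
    have : HasDerivAt (fun s => ∑ a : n, ∑ b : n,
        (P a b * m a b s) • Matrix.single a b (1 : ℝ))
        (∑ a : n, ∑ b : n,
        (P a b * deriv (m a b) 0) • Matrix.single a b (1 : ℝ)) 0 := by
      apply HasDerivAt.fun_sum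
      intro a _
      apply HasDerivAt.fun_sum
      intro b _
      exact (((hmd a b).hasDerivAt).const_mul (P a b)).smul_const _
    rw [hrep']
    exact this.congr_of_eventuallyEq (Filter.Eventually.of_forall fun s => (hQrep s))
  have h1Q : HasDerivAt (fun s => 1 - Q s) (-(P.hadamard M')) 0 :=
    (hQd.const_sub 1)
  -- inverse
  have hQ0 : 1 - Q 0 = (u : Matrix n n ℝ) := by
    rw [hQ 0, hu, IsUnit.unit_spec]
    congr 1
    ext a b
    simp [hm0 a b]
  have hinv : HasFDerivAt Ring.inverse
      (-ContinuousLinearMap.mulLeftRight ℝ (Matrix n n ℝ) ↑u⁻¹ ↑u⁻¹) (1 - Q 0) := by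
    rw [hQ0]; exact hasFDerivAt_ringInverse u
  have hcomp := hinv.comp_hasDerivAt 0 h1Q
  have hval : (-ContinuousLinearMap.mulLeftRight ℝ (Matrix n n ℝ) ↑u⁻¹ ↑u⁻¹) (-(P.hadamard M'))
      = Ring.inverse (1 - P) * (P.hadamard M') * Ring.inverse (1 - P) := by
    have hri : Ring.inverse (1 - P) = (↑u⁻¹ : Matrix n n ℝ) := by
      rw [show (1 - P) = (u : Matrix n n ℝ) from hP.unit_spec.symm, Ring.inverse_unit]
    simp [ContinuousLinearMap.mulLeftRight_apply, hri, mul_assoc]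
  rw [hval] at hcomp
  -- entry extraction
  have hL := ((entryLM i j).toContinuousLinearMap.hasFDerivAt).comp_hasDerivAt 0 hcomp
  exact hL
end

section
/- Let V be a finite type with at least two elements and A a V×V real matrix with nonnegative entries and all row sums equal to 1 (a stochastic matrix), and suppose the support digraph of A is strongly connected: for all i, j ∈ V there exist m ≥ 1 and a sequence i = v_0, v_1, …, v_m = j with A(v_t, v_{t+1}) > 0 for all t < m. Fix j ∈ V and let A_{[j]} denote A with row j replaced by zeros. Then the matrix I − A_{[j]} is invertible. -/
/-- for a stochastic matrix `A` (nonnegative entries, row sums `1`) on a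
finite type `V` with at least two elements, whose support digraph is strongly connected,
and any `j ∈ V`, the matrix `I − A_{[j]}` is invertible, where `A_{[j]}` is `A` with row
`j` replaced by zeros. -/
theorem absorbing_invertible {V : Type*} [Fintype V] [DecidableEq V]
    (hV : 1 < Fintype.card V)
    (A : Matrix V V ℝ)
    (hnonneg : ∀ i j, 0 ≤ A i j)
    (hrow : ∀ i, ∑ j, A i j = 1)
    (hconn : ∀ i j : V, ∃ m : ℕ, 1 ≤ m ∧ ∃ v : ℕ → V, v 0 = i ∧ v m = j ∧
        ∀ t < m, 0 < A (v t) (v (t + 1)))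
    (j : V) :
    IsUnit (1 - Matrix.of fun x y => if x = j then (0 : ℝ) else A x y) := by
  set B : Matrix V V ℝ := Matrix.of fun x y => if x = j then (0 : ℝ) else A x y with hBdef
  rw [Matrix.isUnit_iff_isUnit_det, isUnit_iff_ne_zero]
  intro hdet
  obtain ⟨v, hv, hmv⟩ := Matrix.exists_mulVec_eq_zero_iff.mpr hdet
  have hfix : ∀ i, v i = ∑ k, B i k * v k := by
    intro i
    have h := congrFun hmv i
    rw [Matrix.sub_mulVec, Matrix.one_mulVec] at h
    have h2 : v i - (B.mulVec v) i = 0 := h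
    have h3 := sub_eq_zero.mp h2
    simpa [Matrix.mulVec, dotProduct] using h3
  have hvj : v j = 0 := by
    have h := hfix j
    simpa [hBdef] using h
  haveI : Nonempty V := Fintype.card_pos_iff.mp (by omega)
  obtain ⟨i0, -, hmax⟩ := Finset.exists_max_image Finset.univ (fun k => |v k|)
    ⟨Classical.arbitrary V, Finset.mem_univ _⟩
  set M := |v i0| with hM
  have hmax' : ∀ k, |v k| ≤ M := fun k => hmax k (Finset.mem_univ k)
  have hMpos : 0 < M := by
    obtain ⟨k, hk⟩ := Function.ne_iff.mp hv
    exact lt_of_lt_of_le (abs_pos.mpr hk) (hmax' k)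
  have key : ∀ i, i ≠ j → |v i| = M → ∀ k, 0 < A i k → |v k| = M := by
    intro i hij hi k hk
    have hfi : v i = ∑ l, A i l * v l := by
      have h := hfix i
      simpa [hBdef, hij] using h
    have habs : |v i| ≤ ∑ l, A i l * |v l| := by
      rw [hfi]
      calc |∑ l, A i l * v l| ≤ ∑ l, |A i l * v l| := Finset.abs_sum_le_sum_abs _ _
        _ = ∑ l, A i l * |v l| := by
            refine Finset.sum_congr rfl fun l _ => ?_
            rw [abs_mul, abs_of_nonneg (hnonneg i l)]
    have h1 : ∑ l, A i l * (M - |v l|) = M - ∑ l, A i l * |v l| := by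
      rw [Finset.sum_congr rfl fun l _ => mul_sub (A i l) M (|v l|),
        Finset.sum_sub_distrib, ← Finset.sum_mul, hrow i, one_mul]
    have hsum0 : ∑ l, A i l * (M - |v l|) = 0 := by
      have h2 : ∑ l, A i l * (M - |v l|) ≤ 0 := by
        rw [h1]; linarith [habs, hi]
      have h3 : 0 ≤ ∑ l, A i l * (M - |v l|) :=
        Finset.sum_nonneg fun l _ => mul_nonneg (hnonneg i l) (by linarith [hmax' l])
      linarith
    have hterm := (Finset.sum_eq_zero_iff_of_nonneg fun l _ =>
      mul_nonneg (hnonneg i l) (by linarith [hmax' l])).mp hsum0 k (Finset.mem_univ k)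
    rcases mul_eq_zero.mp hterm with h | h
    · exact absurd h (ne_of_gt hk)
    · have := sub_eq_zero.mp h
      linarith
  obtain ⟨m, hm1, w, hw0, hwm, hwstep⟩ := hconn i0 j
  have hall : ∀ t, t ≤ m → |v (w t)| = M := by
    intro t
    induction t with
    | zero => intro _; rw [hw0]
    | succ t ih =>
      intro ht
      have ht' : t < m := Nat.lt_of_succ_le ht
      have hMt := ih (le_of_lt ht')
      have hwtj : w t ≠ j := by
        intro hEq
        rw [hEq, hvj, abs_zero] at hMt
        linarith
      exact key (w t) hwtj hMt _ (hwstep t ht')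
  have hfin := hall m le_rfl
  rw [hwm, hvj, abs_zero] at hfin
  linarith
end

section
/- Loop expansion of the Mason denominator: let R be a commutative ring, V a finite type, and Q : V×V → R a matrix with Q(i,i) = 0 for all i. Then det(I − Q) = Σ_{σ ∈ Perm(V)} (−1)^{c(σ)} · Π_{i ∈ supp(σ)} Q(i, σ(i)), where supp(σ) is the set of points moved by σ and c(σ) is the number of cycles in the cycle decomposition of σ (the number of parts of its cycle type); the identity permutation contributes the term 1. -/
/-- loop expansion of the Mason denominator.  For a commutative ring `R`,
a finite type `V` and a matrix `Q : V×V → R` with zero diagonal,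
`det(I − Q) = Σ_{σ ∈ Perm(V)} (−1)^{c(σ)} · Π_{i ∈ supp(σ)} Q(i, σ(i))`,
where `c(σ)` is the number of cycles in the cycle decomposition of `σ` (the number of
parts of its cycle type); the identity permutation contributes the term `1`. -/
theorem det_one_sub_eq_sum_over_cycle_bundles {R : Type*} [CommRing R]
    {V : Type*} [Fintype V] [DecidableEq V]
    (Q : Matrix V V R) (hQ : ∀ i, Q i i = 0) :
    (1 - Q).det =
      ∑ σ : Equiv.Perm V,
        (-1 : R) ^ Multiset.card σ.cycleType * ∏ i ∈ σ.support, Q i (σ i) := by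
  rw [← Matrix.det_transpose, Matrix.det_apply]
  refine Finset.sum_congr rfl fun σ _ => ?_
  have hprod : ∏ i, (1 - Q).transpose (σ i) i = ∏ i ∈ σ.support, (-(Q i (σ i))) := by
    refine (Finset.prod_subset (Finset.subset_univ σ.support) ?_).symm.trans
      (Finset.prod_congr rfl fun i hi => ?_)
    · intro i _ hi
      have h : σ i = i := Equiv.Perm.notMem_support.mp hi
      simp [Matrix.transpose_apply, Matrix.sub_apply, Matrix.one_apply, h, hQ i]
    · have h : σ i ≠ i := Equiv.Perm.mem_support.mp hi
      simp [Matrix.transpose_apply, Matrix.sub_apply, Matrix.one_apply, Ne.symm h]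
  rw [hprod]
  have hneg : ∏ i ∈ σ.support, (-(Q i (σ i))) =
      (-1 : R) ^ σ.support.card * ∏ i ∈ σ.support, Q i (σ i) := by
    rw [show (∏ i ∈ σ.support, (-(Q i (σ i)))) = ∏ i ∈ σ.support, (-1 : R) * Q i (σ i) by
      simp, Finset.prod_mul_distrib, Finset.prod_const]
  rw [hneg]
  have hsign : Equiv.Perm.sign σ = (-1 : ℤˣ) ^ (σ.support.card + Multiset.card σ.cycleType) := by
    rw [← Equiv.Perm.sum_cycleType, Equiv.Perm.sign_of_cycleType]
  rw [hsign, Units.smul_def, zsmul_eq_mul]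
  simp only [Units.val_pow_eq_pow_val, Units.val_neg, Units.val_one]
  push_cast
  have h2 : ((-1:R) ^ σ.support.card) * (-1) ^ σ.support.card = 1 := by
    rw [← pow_add]; exact Even.neg_one_pow ⟨_, rfl⟩
  linear_combination ((-1:R) ^ Multiset.card σ.cycleType * ∏ i ∈ σ.support, Q i (σ i)) * h2
end

section
/- Let k ≥ 1 be a natural number and suppose h : ℕ → ℚ satisfies h(k) = 0 and, for every natural number i < k, k·h(i) = k + i·h(i−1) + (k−i)·h(i+1) (when i = 0 the middle term has coefficient 0). Then for every t ≤ k, h(t) = Σ_{s=1}^{k−t} (binom(k−1, s−1))⁻¹ · Σ_{r=s}^{k} binom(k, r). -/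
private lemma bd_key (k m : ℕ) (hm1 : 1 ≤ m) (hmk : m + 1 ≤ k) :
    (m : ℚ) * ((Nat.choose (k-1) (m-1) : ℚ))⁻¹ * (∑ r ∈ Finset.Icc m k, (Nat.choose k r : ℚ)) =
    (k : ℚ) + ((k:ℚ) - (m:ℚ)) * ((Nat.choose (k-1) m : ℚ))⁻¹ *
      (∑ r ∈ Finset.Icc (m+1) k, (Nat.choose k r : ℚ)) := by
  obtain ⟨m', rfl⟩ : ∃ m', m = m' + 1 := ⟨m - 1, by omega⟩
  obtain ⟨d, rfl⟩ : ∃ d, k = m' + 1 + (d + 1) := ⟨k - m' - 2, by omega⟩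
  have hk1 : m' + 1 + (d + 1) - 1 = m' + d + 1 := by omega
  have hm1' : m' + 1 - 1 = m' := by omega
  rw [hk1, hm1']
  have hsplit : Finset.Icc (m'+1) (m'+1+(d+1)) = insert (m'+1) (Finset.Icc (m'+1+1) (m'+1+(d+1))) := by
    ext x; simp [Finset.mem_Icc]; omega
  rw [hsplit, Finset.sum_insert (by simp [Finset.mem_Icc])]
  have hpas : ((m'+1+(d+1)).choose (m'+1) : ℚ) = ((m'+d+1).choose m' : ℚ) + ((m'+d+1).choose (m'+1) : ℚ) := by
    rw [show m'+1+(d+1) = (m'+d+1)+1 from by omega, Nat.choose_succ_succ]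
    push_cast; ring
  have hrelN := Nat.choose_succ_right_eq (m'+d+1) m'
  rw [show m'+d+1-m' = d+1 from by omega] at hrelN
  have hrel : ((m'+d+1).choose (m'+1) : ℚ) * (m'+1) = ((m'+d+1).choose m' : ℚ) * (d+1) := by
    exact_mod_cast congrArg (Nat.cast : ℕ → ℚ) hrelN
  have ha : ((m'+d+1).choose m' : ℚ) ≠ 0 :=
    Nat.cast_ne_zero.mpr (Nat.choose_pos (by omega)).ne'
  have hb : ((m'+d+1).choose (m'+1) : ℚ) ≠ 0 :=
    Nat.cast_ne_zero.mpr (Nat.choose_pos (by omega)).ne'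
  set S' := ∑ r ∈ Finset.Icc (m'+1+1) (m'+1+(d+1)), ((m'+1+(d+1)).choose r : ℚ) with hS'
  rw [hpas]
  push_cast
  field_simp
  linear_combination (S' + ((m'+d+1).choose (m'+1):ℚ)) * hrel

/-- closed-form solution of the mean-first-passage-time equations for the
lumped birth–death chain of the random walk on the Cayley graph of the elementary abelian
group of order `2^k`: if `h(k) = 0` and `k·h(i) = k + i·h(i−1) + (k−i)·h(i+1)` for all
`i < k` (with the middle term having coefficient `0` when `i = 0`), then for all `t ≤ k`,
`h(t) = Σ_{s=1}^{k−t} binom(k−1, s−1)⁻¹ · Σ_{r=s}^{k} binom(k, r)`. -/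
theorem birth_death_mfpt_formula (k : ℕ) (hk : 1 ≤ k) (h : ℕ → ℚ)
    (hend : h k = 0)
    (hrec : ∀ i < k,
      (k : ℚ) * h i = (k : ℚ) + (i : ℚ) * h (i - 1) + ((k : ℚ) - (i : ℚ)) * h (i + 1)) :
    ∀ t ≤ k, h t = ∑ s ∈ Finset.Icc 1 (k - t),
      ((Nat.choose (k - 1) (s - 1) : ℚ))⁻¹ * ∑ r ∈ Finset.Icc s k, (Nat.choose k r : ℚ) := by
  have hk0 : (k:ℚ) ≠ 0 := Nat.cast_ne_zero.mpr (by omega)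
  have gstep : ∀ i, i < k → h i - h (i+1) =
      ((Nat.choose (k-1) (k-i-1) : ℚ))⁻¹ * ∑ r ∈ Finset.Icc (k-i) k, (Nat.choose k r : ℚ) := by
    intro i
    induction i with
    | zero =>
      intro h0
      have hr := hrec 0 h0
      norm_num at hr
      have hd : h 0 - h 1 = 1 := by
        have e : (k:ℚ) * (h 0 - h 1) = k := by linear_combination hr
        field_simp at e
        linarith
      rw [Nat.sub_zero, hd, Finset.Icc_self k]
      simp [Nat.choose_self]
    | succ i ih =>
      intro hik
      have hik' : i < k := Nat.lt_of_succ_lt hik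
      have ihv := ih hik'
      have hr := hrec (i+1) hik
      rw [Nat.add_sub_cancel] at hr
      push_cast at hr
      have hkey := bd_key k (k - (i+1)) (by omega) (by omega)
      rw [show k - i - 1 = k - (i+1) from by omega] at ihv
      rw [show k - i = k - (i+1) + 1 from by omega] at ihv
      have hc : ((k - (i+1) : ℕ) : ℚ) = (k:ℚ) - ((i:ℚ)+1) := by
        rw [Nat.cast_sub hik.le]; push_cast; ring
      rw [hc] at hkey
      have hne : (k:ℚ) - ((i:ℚ)+1) ≠ 0 := by
        have : (i:ℚ)+1 < k := by exact_mod_cast hik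
        intro hcon; linarith
      apply mul_left_cancel₀ hne
      calc ((k:ℚ) - ((i:ℚ)+1)) * (h (i+1) - h (i+1+1))
          = (k:ℚ) + ((i:ℚ)+1) * (h i - h (i+1)) := by linear_combination hr
        _ = (k:ℚ) + ((i:ℚ)+1) * (((Nat.choose (k-1) (k-(i+1)) : ℚ))⁻¹ *
              ∑ r ∈ Finset.Icc (k-(i+1)+1) k, (Nat.choose k r : ℚ)) := by rw [ihv]
        _ = ((k:ℚ) - ((i:ℚ)+1)) * (((Nat.choose (k-1) (k-(i+1)-1) : ℚ))⁻¹ *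
              ∑ r ∈ Finset.Icc (k-(i+1)) k, (Nat.choose k r : ℚ)) := by
            linear_combination -hkey
  have claim : ∀ d, d ≤ k → h (k - d) = ∑ s ∈ Finset.Icc 1 d,
      ((Nat.choose (k-1) (s-1) : ℚ))⁻¹ * ∑ r ∈ Finset.Icc s k, (Nat.choose k r : ℚ) := by
    intro d
    induction d with
    | zero => intro _; simpa using hend
    | succ d ih =>
      intro hd1
      have ihv := ih (by omega)
      have hg := gstep (k - (d+1)) (by omega)
      rw [show k - (k - (d+1)) - 1 = d from by omega] at hg
      rw [show k - (k - (d+1)) = d + 1 from by omega] at hg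
      rw [show k - (d+1) + 1 = k - d from by omega] at hg
      rw [Finset.sum_Icc_succ_top (by omega : 1 ≤ d + 1)]
      rw [← ihv, Nat.add_sub_cancel]
      linarith [hg]
  intro t ht
  have := claim (k - t) (by omega)
  rwa [show k - (k - t) = t from by omega] at this
end
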